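/- arXiv:1605.04575 — 3 statements merged into one kernel-verified Lean document; each statement's English description precedes it below -/
import Mathlib

section
/- Let T be a subcubic tree with γ*_e(T) = γ*_{e,f}(T) > 1 and let D be a minimum porous exponential dominating set of T. Then every vertex of D has degree 3 in T, and every neighbor of a vertex of degree 1 or 2 has degree 3 and does not belong to D. -/
open SimpleGraph Finset

variable {V : Type*}

/-- `(1/2)^(d-1)` for an extended natural `d`, with value `0` at `∞`. -/
noncomputable def halfPow (d : ℕ∞) : ℝ :=
  if d = ⊤ then 0 else 2 * (1 / 2 : ℝ) ^ d.toNat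

/-- `(1/2)^(dist_G(u,v)-1)` using the ordinary graph distance. -/
noncomputable def expw (G : SimpleGraph V) (u v : V) : ℝ :=
  2 * (1 / 2 : ℝ) ^ G.dist u v

/-- The modified distance `dist_{(G,D)}(u,v)`: minimum length of a path from `u` to `v`
whose only vertex in `D` is the endvertex `v` (`∞` if no such path exists). -/
noncomputable def mdist (G : SimpleGraph V) (D : Finset V) (u v : V) : ℕ∞ :=
  sInf ((fun p : G.Walk u v => (p.length : ℕ∞)) ''
    {p | p.IsPath ∧ v ∈ D ∧ ∀ w ∈ p.support, w ∈ D → w = v})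

/-- `w_{(G,D)}(u)`. -/
noncomputable def wblock (G : SimpleGraph V) (D : Finset V) (u : V) : ℝ :=
  ∑ v ∈ D, halfPow (mdist G D u v)

/-- `w*_{(G,D)}(u)`. -/
noncomputable def wstar (G : SimpleGraph V) (D : Finset V) (u : V) : ℝ :=
  ∑ v ∈ D, expw G u v

def IsExpDomSet (G : SimpleGraph V) (D : Finset V) : Prop :=
  ∀ u : V, 1 ≤ wblock G D u

def IsPorousExpDomSet (G : SimpleGraph V) (D : Finset V) : Prop :=
  ∀ u : V, 1 ≤ wstar G D u

def IsDomSet (G : SimpleGraph V) (D : Finset V) : Prop :=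
  ∀ v : V, v ∉ D → ∃ u ∈ D, G.Adj u v

/-- The exponential domination number `γ_e(G)`. -/
noncomputable def gammaE (G : SimpleGraph V) [Fintype V] : ℕ :=
  sInf {k | ∃ D : Finset V, IsExpDomSet G D ∧ D.card = k}

/-- The porous exponential domination number `γ*_e(G)`. -/
noncomputable def gammaEStar (G : SimpleGraph V) [Fintype V] : ℕ :=
  sInf {k | ∃ D : Finset V, IsPorousExpDomSet G D ∧ D.card = k}

/-- The domination number `γ(G)`. -/
noncomputable def gammaDom (G : SimpleGraph V) [Fintype V] : ℕ :=
  sInf {k | ∃ D : Finset V, IsDomSet G D ∧ D.card = k}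

/-- Feasibility for the LP relaxation of porous exponential domination. -/
def FracFeasible (G : SimpleGraph V) [Fintype V] (x : V → ℝ) : Prop :=
  (∀ u, 0 ≤ x u) ∧ ∀ v : V, 1 ≤ ∑ u : V, expw G u v * x u

/-- The fractional porous exponential domination number `γ*_{e,f}(G)`. -/
noncomputable def gammaEF (G : SimpleGraph V) [Fintype V] : ℝ :=
  sInf {s | ∃ x : V → ℝ, FracFeasible G x ∧ s = ∑ u : V, x u}

/-- A graph is subcubic if all degrees are at most `3`. -/
def Subcubic (G : SimpleGraph V) [Fintype V] [DecidableRel G.Adj] : Prop :=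
  ∀ v : V, G.degree v ≤ 3

/-!
Root the tree at `u`. Every vertex `w ≠ u` has exactly one neighbour nearer to `u`, whose weight
`(1/2)^dist(u,·)` is twice that of `w`; counting each edge from both ends gives
`∑_v (3 - deg v) · 2 (1/2)^dist(u,v) = 6`. So `x = (3 - deg)/6` is a fractional solution, and
`6 |D| = ∑_v (3 - deg v) w*(v) ≥ ∑_v (3 - deg v) = 6 ∑ x` for every porous exponential dominating
set `D`. Equality `γ*_e = γ*_{e,f}` thus forces `w* = 1` at every vertex of degree at most `2`.
This is impossible at a vertex of `D` (where `w* ≥ 2`) and, once `|D| ≥ 2`, at a neighbour of a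
vertex of `D`. Finally, for adjacent `u, v` with `w*(u) = w*(v) = 1`, split `D` into the part
nearer to `u`, of weight `a` seen from `u`, and the rest, of weight `b` seen from `v`: then
`a + b/2 = a/2 + b = 1`, so `a = 2/3`, which is not a dyadic rational.
-/

lemma sum_half_pow_ne_one_third {ι : Type*} (A : Finset ι) (k : ι → ℕ) :
    ∑ i ∈ A, (1 / 2 : ℝ) ^ k i ≠ 1 / 3 := by
  intro hsum
  set m := A.sup k
  have hterm : ∀ i ∈ A, (1 / 2 : ℝ) ^ k i = ((2 ^ (m - k i) : ℕ) : ℝ) / 2 ^ m := by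
    intro i hi
    have hm : (2 : ℝ) ^ m = 2 ^ (m - k i) * 2 ^ k i := by
      rw [← pow_add, Nat.sub_add_cancel (le_sup hi)]
    rw [hm, one_div_pow]
    push_cast
    field_simp
  rw [sum_congr rfl hterm, ← sum_div, div_eq_div_iff (by positivity) (by norm_num)] at hsum
  have hnat : 2 ^ m = 3 * ∑ i ∈ A, 2 ^ (m - k i) := by
    rw [one_mul, mul_comm] at hsum
    exact_mod_cast hsum.symm
  have hdvd : 3 ∣ 2 ^ m := ⟨_, hnat⟩
  exact absurd (Nat.prime_three.dvd_of_dvd_pow hdvd) (by norm_num)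

lemma expw_comm (G : SimpleGraph V) (u v : V) : expw G u v = expw G v u := by
  rw [expw, expw, dist_comm]

lemma expw_pos (G : SimpleGraph V) (u v : V) : 0 < expw G u v := by
  unfold expw
  positivity

section ExpWeights

variable {G : SimpleGraph V}

lemma expw_eq_div_two_of_dist_add_one_eq {u v w : V} (h : G.dist u w + 1 = G.dist v w) :
    expw G v w = expw G u w / 2 := by
  rw [expw, expw, ← h, pow_succ]
  ring

lemma gammaEF_le_sum [Fintype V] {x : V → ℝ} (hx : FracFeasible G x) : gammaEF G ≤ ∑ u, x u :=
  csInf_le ⟨0, by rintro s ⟨y, ⟨hy, -⟩, rfl⟩; exact sum_nonneg fun i _ => hy i⟩ ⟨x, hx, rfl⟩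

lemma two_le_wstar_of_mem {D : Finset V} {v : V} (hv : v ∈ D) : 2 ≤ wstar G D v := by
  have h := single_le_sum (fun w _ => (expw_pos G v w).le) hv
  rwa [expw, dist_self, pow_zero, mul_one] at h

lemma one_lt_wstar_of_adj_of_mem {D : Finset V} {u v : V} (huv : G.Adj u v) (hv : v ∈ D)
    (hD : 1 < #D) : 1 < wstar G D u := by
  obtain ⟨w, hw, hwv⟩ := exists_mem_ne hD v
  have huv' : expw G u v = 1 := by simp [expw, dist_eq_one_iff_adj.2 huv]
  have hsplit : expw G u v + expw G u w ≤ wstar G D u :=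
    add_le_sum (fun w _ => (expw_pos G u w).le) hv hw hwv.symm
  linarith [expw_pos G u w]

end ExpWeights

namespace SimpleGraph.IsTree

variable {G : SimpleGraph V}

lemma eq_of_adj_of_dist_add_one_eq (hT : G.IsTree) {u v v' w : V} (hv : G.Adj v w)
    (hv' : G.Adj v' w) (hd : G.dist u v + 1 = G.dist u w) (hd' : G.dist u v' + 1 = G.dist u w) :
    v = v' := by
  obtain ⟨p, -, hp⟩ := hT.connected.exists_path_of_dist u v
  obtain ⟨p', -, hp'⟩ := hT.connected.exists_path_of_dist u v'
  have hpath : (p.concat hv).IsPath :=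
    (p.concat hv).isPath_of_length_eq_dist (by rw [Walk.length_concat, hp, hd])
  have hpath' : (p'.concat hv').IsPath :=
    (p'.concat hv').isPath_of_length_eq_dist (by rw [Walk.length_concat, hp', hd'])
  exact (Walk.concat_inj ((hT.existsUnique_path u w).unique hpath hpath')).1

lemma exists_adj_dist_add_one_eq (hT : G.IsTree) {u w : V} (hw : w ≠ u) :
    ∃ v, G.Adj v w ∧ G.dist u v + 1 = G.dist u w := by
  obtain ⟨p, -, hp⟩ := hT.connected.exists_path_of_dist w u
  cases p with
  | nil => exact absurd rfl hw
  | @cons _ v _ hwv q =>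
    have hle : G.dist u v ≤ q.length := dist_comm (G := G) ▸ dist_le q
    rw [Walk.length_cons, dist_comm] at hp
    refine ⟨v, hwv.symm, ?_⟩
    rcases hT.dist_eq_dist_add_one_of_adj u hwv with h | h <;> omega

lemma card_filter_adj_dist_add_one_eq_one [Fintype V] [DecidableRel G.Adj] (hT : G.IsTree)
    {u w : V} (hw : w ≠ u) : #{v | G.Adj v w ∧ G.dist u v + 1 = G.dist u w} = 1 := by
  obtain ⟨v, hv⟩ := hT.exists_adj_dist_add_one_eq hw
  refine card_eq_one.2 ⟨v, ?_⟩
  ext v'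
  simp only [mem_filter, mem_univ, true_and, mem_singleton]
  exact ⟨fun hv' => hT.eq_of_adj_of_dist_add_one_eq hv'.1 hv.1 hv'.2 hv.2, fun h => h ▸ hv⟩

lemma degree_eq_card_add_card [Fintype V] [DecidableRel G.Adj] (hT : G.IsTree) (u w : V) :
    G.degree w = #{v | G.Adj v w ∧ G.dist u v + 1 = G.dist u w} +
      #{v | G.Adj w v ∧ G.dist u w + 1 = G.dist u v} := by
  classical
  rw [← card_neighborFinset_eq_degree, neighborFinset_eq_filter, ← card_union_of_disjoint]
  · congr 1
    ext v
    simp only [mem_filter, mem_univ, true_and, mem_union]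
    constructor
    · intro hwv
      rcases hT.dist_eq_dist_add_one_of_adj u hwv with h | h
      · exact Or.inl ⟨hwv.symm, h.symm⟩
      · exact Or.inr ⟨hwv, h.symm⟩
    · rintro (⟨hvw, -⟩ | ⟨hwv, -⟩)
      exacts [hvw.symm, hwv]
  · refine disjoint_filter.2 fun v _ h h' => ?_
    omega

lemma sum_degree_mul_half_pow_dist [Fintype V] [DecidableRel G.Adj] (hT : G.IsTree) (u : V) :
    ∑ v, (G.degree v : ℝ) * (1 / 2) ^ G.dist u v = 3 * (∑ v, (1 / 2 : ℝ) ^ G.dist u v - 1) := by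
  set g : V → ℝ := fun v => (1 / 2) ^ G.dist u v
  set R : V → V → Prop := fun a b => G.Adj a b ∧ G.dist u a + 1 = G.dist u b
  have hparents : ∑ w, (#{v | R v w} : ℝ) * g w = ∑ v, g v - 1 := by
    classical
    have hroot : #{v | R v u} = 0 := card_eq_zero.2 <| filter_eq_empty_iff.2 fun v _ h => by
      simp [R] at h
    have hgu : g u = 1 := by simp [g]
    rw [← add_sum_erase _ _ (mem_univ u), ← add_sum_erase _ _ (mem_univ u), hroot, hgu]
    simp only [Nat.cast_zero, zero_mul, zero_add, add_sub_cancel_left]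
    refine sum_congr rfl fun w hw => ?_
    rw [hT.card_filter_adj_dist_add_one_eq_one (ne_of_mem_erase hw), Nat.cast_one, one_mul]
  have hchildren : ∑ w, (#{v | R w v} : ℝ) * g w = 2 * ∑ w, (#{v | R v w} : ℝ) * g w := by
    simp only [card_filter, Nat.cast_sum, Nat.cast_ite, Nat.cast_one, Nat.cast_zero, sum_mul,
      ite_mul, one_mul, zero_mul, mul_sum]
    rw [sum_comm]
    refine sum_congr rfl fun w _ => sum_congr rfl fun v _ => ?_
    split_ifs with h
    · simp only [g, ← h.2, pow_succ]
      ring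
    · simp
  simp only [hT.degree_eq_card_add_card u, Nat.cast_add, add_mul, sum_add_distrib]
  rw [hchildren, hparents]
  ring

lemma sum_three_sub_degree_mul_expw [Fintype V] [DecidableRel G.Adj] (hT : G.IsTree)
    (u : V) : ∑ v, (3 - G.degree v : ℝ) * expw G u v = 6 := by
  have hterm : ∀ v, (3 - G.degree v : ℝ) * expw G u v =
      6 * (1 / 2) ^ G.dist u v - 2 * ((G.degree v : ℝ) * (1 / 2) ^ G.dist u v) := fun v => by
    rw [expw]
    ring
  rw [sum_congr rfl fun v _ => hterm v, sum_sub_distrib, ← mul_sum, ← mul_sum,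
    hT.sum_degree_mul_half_pow_dist u]
  ring

lemma sum_three_sub_degree_mul_wstar [Fintype V] [DecidableRel G.Adj] (hT : G.IsTree)
    (D : Finset V) : ∑ v, (3 - G.degree v : ℝ) * wstar G D v = 6 * #D :=
  calc ∑ v, (3 - G.degree v : ℝ) * wstar G D v
      = ∑ u ∈ D, ∑ v, (3 - G.degree v : ℝ) * expw G u v := by
        simp only [wstar, mul_sum]
        rw [sum_comm]
        exact sum_congr rfl fun u _ => sum_congr rfl fun v _ => by rw [expw_comm]
    _ = 6 * #D := by
        rw [sum_congr rfl fun u _ => hT.sum_three_sub_degree_mul_expw u, sum_const,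
          nsmul_eq_mul, mul_comm]

lemma fracFeasible_three_sub_degree_div_six [Fintype V] [DecidableRel G.Adj]
    (hT : G.IsTree) (hsub : Subcubic G) : FracFeasible G fun v => (3 - G.degree v : ℝ) / 6 := by
  refine ⟨fun v => div_nonneg (sub_nonneg.2 (by exact_mod_cast hsub v)) (by norm_num),
    fun v => le_of_eq ?_⟩
  calc (1 : ℝ) = (∑ u, (3 - G.degree u : ℝ) * expw G v u) / 6 := by
        rw [hT.sum_three_sub_degree_mul_expw v]
        norm_num
    _ = ∑ u, expw G u v * ((3 - G.degree u : ℝ) / 6) := by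
        rw [sum_div]
        refine sum_congr rfl fun u _ => ?_
        rw [expw_comm]
        ring

lemma wstar_eq_one_of_degree_le_two [Fintype V] [DecidableRel G.Adj] (hT : G.IsTree)
    (hsub : Subcubic G) {D : Finset V} (hD : IsPorousExpDomSet G D)
    (hcard : (#D : ℝ) ≤ ∑ v, (3 - G.degree v : ℝ) / 6) {v : V} (hv : G.degree v ≤ 2) :
    wstar G D v = 1 := by
  have hterm : ∀ w ∈ univ, 0 ≤ (3 - G.degree w : ℝ) * (wstar G D w - 1) := fun w _ =>
    mul_nonneg (sub_nonneg.2 (by exact_mod_cast hsub w)) (sub_nonneg.2 (hD w))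
  have hzero : ∑ w, (3 - G.degree w : ℝ) * (wstar G D w - 1) = 0 := by
    refine le_antisymm ?_ (sum_nonneg hterm)
    rw [← sum_div] at hcard
    simp only [mul_sub, mul_one]
    rw [sum_sub_distrib, hT.sum_three_sub_degree_mul_wstar D]
    linarith
  have hpos : (0 : ℝ) < 3 - G.degree v := by
    have : (G.degree v : ℝ) ≤ 2 := by exact_mod_cast hv
    linarith
  have hv' := (mul_eq_zero.1 ((sum_eq_zero_iff_of_nonneg hterm).1 hzero v (mem_univ v)))
  linarith [hv'.resolve_left hpos.ne']

lemma wstar_ne_one_of_adj (hT : G.IsTree) {D : Finset V} {u v : V} (huv : G.Adj u v)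
    (hu : wstar G D u = 1) : wstar G D v ≠ 1 := by
  intro hv
  set A := D.filter fun w => G.dist u w + 1 = G.dist v w
  set B := D.filter fun w => ¬G.dist u w + 1 = G.dist v w
  have hB : ∀ w ∈ B, G.dist v w + 1 = G.dist u w := by
    intro w hw
    have h := (mem_filter.1 hw).2
    have : G.dist w u = G.dist u w := dist_comm
    have : G.dist w v = G.dist v w := dist_comm
    rcases hT.dist_eq_dist_add_one_of_adj w huv with h' | h' <;> omega
  have hu' : wstar G D u = ∑ w ∈ A, expw G u w + (∑ w ∈ B, expw G v w) / 2 := by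
    rw [wstar, ← sum_filter_add_sum_filter_not D fun w => G.dist u w + 1 = G.dist v w, sum_div]
    exact congrArg _ (sum_congr rfl fun w hw => expw_eq_div_two_of_dist_add_one_eq (hB w hw))
  have hv' : wstar G D v = (∑ w ∈ A, expw G u w) / 2 + ∑ w ∈ B, expw G v w := by
    rw [wstar, ← sum_filter_add_sum_filter_not D fun w => G.dist u w + 1 = G.dist v w, sum_div]
    exact congrArg (· + _) (sum_congr rfl fun w hw =>
      expw_eq_div_two_of_dist_add_one_eq (mem_filter.1 hw).2)
  have hA : ∑ w ∈ A, expw G u w = 2 / 3 := by linarith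
  apply sum_half_pow_ne_one_third A (G.dist u)
  simp only [expw, ← mul_sum] at hA
  linarith

end SimpleGraph.IsTree

/-- If `T` is a subcubic tree with `γ*_e(T) = γ*_{e,f}(T) > 1` and `D` is a minimum porous
exponential dominating set, then `D ⊆ V₃` and `N(V₁ ∪ V₂) ⊆ V₃ \ D`. -/
theorem stmt_8 {V : Type*} [Fintype V] (G : SimpleGraph V) [DecidableRel G.Adj]
    (hT : G.IsTree) (hsub : Subcubic G)
    (heq : (gammaEStar G : ℝ) = gammaEF G) (hgt : 1 < gammaEStar G)
    (D : Finset V) (hD : IsPorousExpDomSet G D) (hmin : D.card = gammaEStar G) :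
    (∀ v ∈ D, G.degree v = 3) ∧
    ∀ u v : V, (G.degree u = 1 ∨ G.degree u = 2) → G.Adj u v →
      G.degree v = 3 ∧ v ∉ D := by
  have hcard : (#D : ℝ) ≤ ∑ v, (3 - G.degree v : ℝ) / 6 := by
    rw [hmin, heq]
    exact gammaEF_le_sum (hT.fracFeasible_three_sub_degree_div_six hsub)
  have hslack : ∀ v, G.degree v ≤ 2 → wstar G D v = 1 := fun v hv =>
    hT.wstar_eq_one_of_degree_le_two hsub hD hcard hv
  have hdegD : ∀ v ∈ D, G.degree v = 3 := fun v hv => by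
    by_contra hne
    have := hslack v (by have := hsub v; omega)
    linarith [two_le_wstar_of_mem (G := G) hv]
  refine ⟨hdegD, fun u v hu huv => ?_⟩
  have hslack_u := hslack u (by omega)
  have hvD : v ∉ D := fun hv =>
    (one_lt_wstar_of_adj_of_mem huv hv (by omega)).ne' hslack_u
  refine ⟨?_, hvD⟩
  by_contra hne
  exact hT.wstar_ne_one_of_adj huv hslack_u (hslack v (by have := hsub v; omega))
end

section
/- If G is a connected graph of order n, maximum degree at most 3, and diameter d, then γ*_{e,f}(G) ≥ n/(2+3d). -/
open SimpleGraph Finset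

variable {V : Type*}

/-!
Every vertex `u` sends total weight `∑ v, 2 (1/2)^dist(u,v) ≤ 2 + 3d`: the sphere of radius `i ≥ 1`
around `u` has at most `3 · 2^(i-1)` vertices, each receiving weight `2 (1/2)^i`, so each of the `d`
nonempty spheres contributes at most `3`, and `u` itself contributes `2`. Summing the LP constraints
over all `n` vertices against a feasible `x` therefore gives `n ≤ (2 + 3d) ∑ x`.
-/

namespace SimpleGraph

variable {G : SimpleGraph V}

/-- Vertices not reachable from `u` have `G.dist u v = 0`, so they lie in `G.sphere u 0`. -/
noncomputable def sphere (G : SimpleGraph V) [Fintype V] (u : V) (i : ℕ) : Finset V :=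
  {v | G.dist u v = i}

@[simp]
lemma mem_sphere [Fintype V] {u v : V} {i : ℕ} : v ∈ G.sphere u i ↔ G.dist u v = i := by
  simp [sphere]

lemma Connected.sphere_zero [Fintype V] (hc : G.Connected) (u : V) : G.sphere u 0 = {u} := by
  ext v
  simp [hc.dist_eq_zero_iff, eq_comm]

lemma sphere_one [Fintype V] [DecidableRel G.Adj] (u : V) : G.sphere u 1 = G.neighborFinset u := by
  ext v
  simp

lemma exists_adj_dist_eq_of_dist_eq_succ {u v : V} {i : ℕ} (h : G.dist u v = i + 1) :
    ∃ w, G.Adj w v ∧ G.dist u w = i := by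
  have hvu : G.dist v u = i + 1 := dist_comm.trans h
  obtain ⟨p, hp⟩ := exists_walk_of_dist_ne_zero (hvu.trans_ne (Nat.succ_ne_zero i))
  rw [hvu] at hp
  cases p with
  | nil => simp at hp
  | @cons _ w _ hadj q =>
    have hq : G.dist u w ≤ i := by
      rw [dist_comm, ← Nat.succ_inj.mp hp]
      exact G.dist_le q
    refine ⟨w, hadj.symm, ?_⟩
    rcases hadj.symm.diff_dist_adj (u := u) with h' | h' | h' <;> omega

variable [Fintype V] [DecidableRel G.Adj] {Δ : ℕ}

lemma card_neighborFinset_filter_dist_eq_le (hdeg : ∀ v, G.degree v ≤ Δ) {u w : V} {i : ℕ}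
    (hw : G.dist u w = i + 1) : #{z ∈ G.neighborFinset w | G.dist u z = i + 2} ≤ Δ - 1 := by
  obtain ⟨w', hadj, hw'⟩ := exists_adj_dist_eq_of_dist_eq_succ hw
  have hlt : #{z ∈ G.neighborFinset w | G.dist u z = i + 2} < G.degree w := by
    rw [← card_neighborFinset_eq_degree]
    exact card_lt_card (filter_ssubset.mpr ⟨w', (G.mem_neighborFinset w w').mpr hadj.symm, by omega⟩)
  have := hdeg w
  omega

theorem card_sphere_succ_le (hdeg : ∀ v, G.degree v ≤ Δ) (u : V) :
    ∀ i, #(G.sphere u (i + 1)) ≤ Δ * (Δ - 1) ^ i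
  | 0 => by
    rw [sphere_one, card_neighborFinset_eq_degree, pow_zero, mul_one]
    exact hdeg u
  | i + 1 => by
    classical
    have hcover : G.sphere u (i + 2) ⊆
        (G.sphere u (i + 1)).biUnion fun w => {z ∈ G.neighborFinset w | G.dist u z = i + 2} := by
      intro v hv
      rw [mem_sphere] at hv
      obtain ⟨w, hadj, hw⟩ := exists_adj_dist_eq_of_dist_eq_succ hv
      simpa using ⟨w, hw, hadj, hv⟩
    calc #(G.sphere u (i + 2))
        ≤ #(G.sphere u (i + 1)) * (Δ - 1) :=
          (card_le_card hcover).trans <| card_biUnion_le_card_mul _ _ _ fun w hw =>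
            card_neighborFinset_filter_dist_eq_le hdeg (mem_sphere.mp hw)
      _ ≤ Δ * (Δ - 1) ^ i * (Δ - 1) := Nat.mul_le_mul_right _ (card_sphere_succ_le hdeg u i)
      _ = Δ * (Δ - 1) ^ (i + 1) := by ring

end SimpleGraph

section FractionalDomination

variable (G : SimpleGraph V)

lemma expw_nonneg (u v : V) : 0 ≤ expw G u v := by
  unfold expw
  positivity

lemma expw_self (v : V) : expw G v v = 2 := by
  simp [expw]

variable [Fintype V]

lemma fracFeasible_one : FracFeasible G 1 := by
  refine ⟨fun _ => zero_le_one, fun v => ?_⟩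
  calc (1 : ℝ) ≤ expw G v v * 1 := by rw [expw_self]; norm_num
    _ ≤ ∑ u, expw G u v * 1 :=
      single_le_sum (fun u _ => mul_nonneg (expw_nonneg G u v) zero_le_one) (mem_univ v)

variable {G}

/-- Weak LP duality with the constant dual solution `1 / c`. -/
lemma card_le_mul_sum_of_fracFeasible {c : ℝ} (hrow : ∀ u, ∑ v, expw G u v ≤ c) {x : V → ℝ}
    (hx : FracFeasible G x) : (Fintype.card V : ℝ) ≤ c * ∑ u, x u :=
  calc (Fintype.card V : ℝ) = ∑ _v : V, (1 : ℝ) := by simp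
    _ ≤ ∑ v, ∑ u, expw G u v * x u := sum_le_sum fun v _ => hx.2 v
    _ = ∑ u, (∑ v, expw G u v) * x u := by
      rw [sum_comm]
      simp_rw [sum_mul]
    _ ≤ ∑ u, c * x u := sum_le_sum fun u _ => mul_le_mul_of_nonneg_right (hrow u) (hx.1 u)
    _ = c * ∑ u, x u := (mul_sum _ _ _).symm

lemma card_div_le_gammaEF {c : ℝ} (hc : 0 < c) (hrow : ∀ u, ∑ v, expw G u v ≤ c) :
    (Fintype.card V : ℝ) / c ≤ gammaEF G := by
  refine le_csInf ⟨_, 1, fracFeasible_one G, rfl⟩ ?_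
  rintro _ ⟨x, hx, rfl⟩
  rw [div_le_iff₀ hc, mul_comm]
  exact card_le_mul_sum_of_fracFeasible hrow hx

lemma sum_expw_le [DecidableRel G.Adj] (hc : G.Connected) (hsub : Subcubic G) (u : V) :
    ∑ v, expw G u v ≤ 2 + 3 * (G.diam : ℝ) := by
  have := hc.nonempty
  have hdiam : ∀ v, G.dist u v ∈ range (G.diam + 1) := fun v =>
    mem_range.mpr <| Nat.lt_succ_of_le <| dist_le_diam (connected_iff_ediam_ne_top.mp hc)
  have hshell : ∀ i : ℕ, (#(G.sphere u (i + 1)) : ℝ) * (2 * (1 / 2) ^ (i + 1)) ≤ 3 := by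
    intro i
    calc (#(G.sphere u (i + 1)) : ℝ) * (2 * (1 / 2) ^ (i + 1))
        ≤ ((3 * (3 - 1) ^ i : ℕ) : ℝ) * (2 * (1 / 2) ^ (i + 1)) := by
          gcongr
          exact_mod_cast card_sphere_succ_le hsub u i
      _ = 3 := by
          push_cast
          rw [pow_succ, one_div_pow]
          field_simp
  calc ∑ v, expw G u v
      = ∑ i ∈ range (G.diam + 1), ∑ v ∈ G.sphere u i, expw G u v := by
        rw [← sum_fiberwise_of_maps_to fun v _ => hdiam v]
        rfl
    _ = ∑ i ∈ range (G.diam + 1), (#(G.sphere u i) : ℝ) * (2 * (1 / 2) ^ i) := by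
        refine sum_congr rfl fun i _ => ?_
        rw [sum_congr rfl fun v hv => by rw [expw, mem_sphere.mp hv], sum_const, nsmul_eq_mul]
    _ = ∑ i ∈ range G.diam, (#(G.sphere u (i + 1)) : ℝ) * (2 * (1 / 2) ^ (i + 1)) + 2 := by
        rw [sum_range_succ', hc.sphere_zero]
        norm_num
    _ ≤ ∑ _i ∈ range G.diam, (3 : ℝ) + 2 := by gcongr with i; exact hshell i
    _ = 2 + 3 * (G.diam : ℝ) := by rw [sum_const, card_range, nsmul_eq_mul]; ring

end FractionalDomination

/-- If `G` is connected of order `n`, maximum degree at most 3, and diameter `d`,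
then `γ*_{e,f}(G) ≥ n/(2+3d)`. -/
theorem stmt_12 {V : Type*} [Fintype V] (G : SimpleGraph V) [DecidableRel G.Adj]
    (hc : G.Connected) (hsub : Subcubic G) :
    (Fintype.card V : ℝ) / (2 + 3 * (G.diam : ℝ)) ≤ gammaEF G :=
  card_div_le_gammaEF (by positivity) (sum_expw_le hc hsub)
end

section
/- For the path P_n, the fractional porous exponential domination number satisfies γ*_{e,f}(P_n) = (n+2)/6. -/
/-! On `P_n` the weight `expw` is `2^{1-|i-j|}`. Put `1/6` on every vertex and another `1/6` on
each endvertex. Splitting at `v`, the two geometric sums give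
`∑_u 2^{1-|u-v|} / 6 = 1 - 2^{-v} / 3 - 2^{-(n-1-v)} / 3`, and the two end bonuses contribute
exactly the missing `2^{-v} / 3 + 2^{-(n-1-v)} / 3`, so every constraint is tight. Because the
constraint matrix is symmetric, a feasible point with all constraints tight is also an optimal
dual solution, so by weak duality `γ*_{e,f}(P_n)` is its total weight `(n + 2) / 6`. -/

open SimpleGraph Finset

variable {V : Type*}

theorem gammaEF_eq_sum_of_tight [Fintype V] {G : SimpleGraph V} {y : V → ℝ}
    (hy₀ : ∀ u, 0 ≤ y u) (hy : ∀ v, ∑ u, expw G u v * y u = 1) :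
    gammaEF G = ∑ u, y u := by
  have hfeas : FracFeasible G y := ⟨hy₀, fun v => (hy v).ge⟩
  have hlb : ∀ x, FracFeasible G x → ∑ u, y u ≤ ∑ u, x u := by
    rintro x ⟨-, hx⟩
    calc ∑ v, y v ≤ ∑ v, y v * ∑ u, expw G u v * x u :=
          sum_le_sum fun v _ => le_mul_of_one_le_right (hy₀ v) (hx v)
      _ = ∑ u, x u * ∑ v, expw G v u * y v := by
          simp only [mul_sum]
          rw [sum_comm]
          refine sum_congr rfl fun u _ => sum_congr rfl fun v _ => ?_
          rw [expw_comm G u v]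
          ring
      _ = ∑ u, x u := by simp only [hy, mul_one]
  refine le_antisymm (csInf_le ⟨∑ u, y u, ?_⟩ ⟨y, hfeas, rfl⟩)
    (le_csInf ⟨_, y, hfeas, rfl⟩ ?_) <;>
    · rintro _ ⟨x, hx, rfl⟩
      exact hlb x hx

lemma pathGraph_dist_le_of_add_eq {n : ℕ} (k : ℕ) :
    ∀ {i j : Fin n}, (i : ℕ) + k = j → (pathGraph n).dist i j ≤ k := by
  induction k with
  | zero =>
    intro i j h
    rw [Fin.ext (by omega : (i : ℕ) = j), dist_self]
  | succ k ih =>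
    intro i j h
    let i' : Fin n := ⟨i + 1, by have := j.isLt; omega⟩
    have hadj : (pathGraph n).Adj i i' := pathGraph_adj.2 (Or.inl rfl)
    calc (pathGraph n).dist i j ≤ (pathGraph n).dist i i' + (pathGraph n).dist i' j :=
          hadj.reachable.dist_triangle_left j
      _ ≤ 1 + k := add_le_add (dist_eq_one_iff_adj.2 hadj).le (ih (by simp only [i']; omega))
      _ = k + 1 := add_comm 1 k

lemma pathGraph_natDist_le_walk_length {n : ℕ} {i j : Fin n} (p : (pathGraph n).Walk i j) :
    Nat.dist i j ≤ p.length := by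
  induction p with
  | nil => simp
  | cons h p ih =>
    rw [pathGraph_adj] at h
    simp only [Nat.dist, Walk.length_cons] at *
    omega

theorem pathGraph_dist {n : ℕ} (i j : Fin n) : (pathGraph n).dist i j = Nat.dist i j := by
  obtain ⟨p, hp⟩ := (pathGraph_preconnected n i j).exists_walk_length_eq_dist
  refine le_antisymm ?_ (hp ▸ pathGraph_natDist_le_walk_length p)
  rcases le_total (i : ℕ) j with h | h
  · exact pathGraph_dist_le_of_add_eq _ (by simp only [Nat.dist]; omega)
  · rw [SimpleGraph.dist_comm, Nat.dist_comm]
    exact pathGraph_dist_le_of_add_eq _ (by simp only [Nat.dist]; omega)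

lemma sum_range_half_pow (m : ℕ) :
    ∑ i ∈ range m, (1 / 2 : ℝ) ^ i = 2 - 2 * (1 / 2) ^ m := by
  rw [geom_sum_eq (by norm_num)]
  ring

lemma sum_range_half_pow_dist {n u : ℕ} (hu : u < n) :
    ∑ i ∈ range n, (1 / 2 : ℝ) ^ Nat.dist u i = 3 - (1 / 2) ^ u - (1 / 2) ^ (n - 1 - u) := by
  obtain ⟨m, rfl⟩ : ∃ m, n = u + 1 + m := ⟨n - 1 - u, by omega⟩
  have hleft : ∑ i ∈ range (u + 1), (1 / 2 : ℝ) ^ Nat.dist u i = 2 - (1 / 2) ^ u := by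
    have hdist : ∀ i ∈ range (u + 1), Nat.dist u (u + 1 - 1 - i) = i := fun i hi => by
      rw [mem_range] at hi; simp only [Nat.dist]; omega
    rw [← sum_range_reflect, sum_congr rfl fun i hi => by rw [hdist i hi], sum_range_half_pow,
      pow_succ]
    ring
  have hright : ∑ i ∈ range m, (1 / 2 : ℝ) ^ Nat.dist u (u + 1 + i) = 1 - (1 / 2) ^ m := by
    have hdist : ∀ i, Nat.dist u (u + 1 + i) = i + 1 := fun i => by simp only [Nat.dist]; omega
    simp only [hdist, pow_succ, ← sum_mul, sum_range_half_pow]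
    ring
  rw [sum_range_add, hleft, hright, show u + 1 + m - 1 - u = m by omega]
  ring

/-- For `n = 1` the single vertex receives both end bonuses, so its weight is `1/2`, not `1/3`. -/
noncomputable def pathDual (n i : ℕ) : ℝ :=
  1 / 6 + (if i = 0 then 1 / 6 else 0) + (if i = n - 1 then 1 / 6 else 0)

lemma pathDual_nonneg (n i : ℕ) : 0 ≤ pathDual n i := by
  unfold pathDual
  split_ifs <;> norm_num

lemma sum_range_pathDual {n : ℕ} (hn : 1 ≤ n) :
    ∑ i ∈ range n, pathDual n i = ((n : ℝ) + 2) / 6 := by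
  simp only [pathDual, sum_add_distrib, sum_ite_eq', mem_range, sum_const, card_range,
    nsmul_eq_mul]
  rw [if_pos (by omega), if_pos (by omega)]
  ring

lemma sum_expw_pathGraph_mul_pathDual {n : ℕ} (v : Fin n) :
    ∑ u : Fin n, expw (pathGraph n) u v * pathDual n u = 1 := by
  have hv := v.isLt
  have hsplit : ∀ i, 2 * (1 / 2 : ℝ) ^ Nat.dist v i * pathDual n i =
      1 / 3 * (1 / 2 : ℝ) ^ Nat.dist v i
        + (if i = 0 then 1 / 3 * (1 / 2 : ℝ) ^ Nat.dist v i else 0)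
        + (if i = n - 1 then 1 / 3 * (1 / 2 : ℝ) ^ Nat.dist v i else 0) := fun i => by
    unfold pathDual
    split_ifs <;> ring
  simp only [expw, pathGraph_dist, Nat.dist_comm _ (v : ℕ)]
  rw [Fin.sum_univ_eq_sum_range (fun i => 2 * (1 / 2 : ℝ) ^ Nat.dist v i * pathDual n i)]
  simp only [hsplit, sum_add_distrib, sum_ite_eq', mem_range, ← mul_sum,
    sum_range_half_pow_dist hv]
  rw [if_pos (by omega), if_pos (by omega), Nat.dist_zero_right,
    show Nat.dist v (n - 1) = n - 1 - v by simp only [Nat.dist]; omega]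
  ring

/-- For the path `P_n` (`n ≥ 1`), `γ*_{e,f}(P_n) = (n+2)/6`. -/
theorem stmt_18 (n : ℕ) (hn : 1 ≤ n) :
    gammaEF (SimpleGraph.pathGraph n) = ((n : ℝ) + 2) / 6 := by
  rw [gammaEF_eq_sum_of_tight (y := fun v : Fin n => pathDual n v)
      (fun v => pathDual_nonneg n v) sum_expw_pathGraph_mul_pathDual,
    Fin.sum_univ_eq_sum_range (pathDual n), sum_range_pathDual hn]
end
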